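/- For all natural numbers j and k, the greatest common divisor gcd(N_j, N_k) divides N_{j+k}. -/

import Mathlib

/-!
For odd `t` we have `N t = 2`, and `2 ∣ N t` for even positive `t`; as `gcd 0 n = n`, this
settles every case except `j`, `k` both even and positive. There compare `p`-adic valuations:
`v_p(N t) = [p = 2] + [(p - 1) ∣ t] (v_p(t) + 1)`. If `p - 1` divides both `j` and `k`, it
divides `j + k`, and `min (v_p j) (v_p k) ≤ v_p (j + k)`; otherwise the minimum of the two
valuations is at most `[p = 2]`.
-/

/-- For `t ∈ ℕ`: `N 0 = 0`; `N t = 2` for odd `t`;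
`N t = 2 * ∏_{p prime, (p-1) ∣ t} p^(v_p(t)+1)` for even positive `t`.
(Any prime `p` with `(p-1) ∣ t` satisfies `p ≤ t + 1 < t + 2`.) -/
def Npaper (t : ℕ) : ℕ :=
  if t = 0 then 0
  else if t % 2 = 1 then 2
  else 2 * ∏ p ∈ Finset.filter (fun p => p.Prime ∧ (p - 1) ∣ t) (Finset.range (t + 2)),
      p ^ (t.factorization p + 1)

lemma Nat.min_factorization_le_factorization_add (j k p : ℕ) :
    min (j.factorization p) (k.factorization p) ≤ (j + k).factorization p := by
  rcases eq_or_ne (j + k) 0 with hjk | hjk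
  · simp [Nat.add_eq_zero_iff.mp hjk]
  by_cases hp : p.Prime
  · rw [← hp.pow_dvd_iff_le_factorization hjk]
    exact dvd_add ((pow_dvd_pow p (min_le_left _ _)).trans (Nat.ordProj_dvd j p))
      ((pow_dvd_pow p (min_le_right _ _)).trans (Nat.ordProj_dvd k p))
  · simp [Nat.factorization_eq_zero_of_not_prime _ hp]

lemma Nat.factorization_prod_primes_pow {S : Finset ℕ} (hS : ∀ p ∈ S, p.Prime) (e : ℕ → ℕ)
    (q : ℕ) : (∏ p ∈ S, p ^ e p).factorization q = if q ∈ S then e q else 0 := by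
  rw [Nat.factorization_prod fun p hp => pow_ne_zero _ (hS p hp).ne_zero, Finsupp.finsetSum_apply,
    ← Finset.sum_ite_eq' S q e]
  refine Finset.sum_congr rfl fun p hp => ?_
  simp [Nat.factorization_pow, (hS p hp).factorization, Finsupp.single_apply]

lemma Npaper_of_odd {t : ℕ} (ht : t % 2 = 1) : Npaper t = 2 := by
  rw [Npaper, if_neg (by omega), if_pos ht]

lemma Npaper_of_even {t : ℕ} (ht0 : t ≠ 0) (ht : t % 2 = 0) :
    Npaper t = 2 * ∏ p ∈ Finset.filter (fun p => p.Prime ∧ (p - 1) ∣ t) (Finset.range (t + 2)),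
      p ^ (t.factorization p + 1) := by
  rw [Npaper, if_neg ht0, if_neg (by omega)]

lemma Npaper_ne_zero {t : ℕ} (ht : t ≠ 0) : Npaper t ≠ 0 := by
  rcases Nat.mod_two_eq_zero_or_one t with he | ho
  · rw [Npaper_of_even ht he]
    exact mul_ne_zero two_ne_zero <| Finset.prod_ne_zero_iff.mpr fun p hp =>
      pow_ne_zero _ (Finset.mem_filter.mp hp).2.1.ne_zero
  · simp [Npaper_of_odd ho]

lemma factorization_Npaper_of_even {t : ℕ} (ht0 : t ≠ 0) (ht : t % 2 = 0) {p : ℕ}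
    (hp : p.Prime) : (Npaper t).factorization p =
      (if p = 2 then 1 else 0) + if (p - 1) ∣ t then t.factorization p + 1 else 0 := by
  have hS : ∀ q ∈ Finset.filter (fun p => p.Prime ∧ (p - 1) ∣ t) (Finset.range (t + 2)),
      q.Prime := fun q hq => (Finset.mem_filter.mp hq).2.1
  have hprod := Npaper_ne_zero ht0
  rw [Npaper_of_even ht0 ht] at hprod ⊢
  rw [Nat.factorization_mul two_ne_zero (right_ne_zero_of_mul hprod), Finsupp.add_apply,
    Nat.prime_two.factorization, Finsupp.single_apply, Nat.factorization_prod_primes_pow hS]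
  congr 1
  · simp [eq_comm]
  · have hlt : (p - 1) ∣ t → p < t + 2 := fun hd => by
      have := Nat.le_of_dvd (Nat.pos_of_ne_zero ht0) hd
      omega
    simp only [Finset.mem_filter, Finset.mem_range]
    by_cases hd : (p - 1) ∣ t <;> simp [hd, hp, hlt]

lemma two_dvd_Npaper_of_even {t : ℕ} (ht0 : t ≠ 0) (ht : t % 2 = 0) : 2 ∣ Npaper t := by
  rw [Npaper_of_even ht0 ht]
  exact dvd_mul_right 2 _

lemma gcd_Npaper_dvd_of_even {j k : ℕ} (hj0 : j ≠ 0) (hj : j % 2 = 0) (hk0 : k ≠ 0)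
    (hk : k % 2 = 0) : Nat.gcd (Npaper j) (Npaper k) ∣ Npaper (j + k) := by
  have hjk0 : j + k ≠ 0 := by omega
  rw [← Nat.factorization_le_iff_dvd (Nat.gcd_ne_zero_left (Npaper_ne_zero hj0))
    (Npaper_ne_zero hjk0), Nat.factorization_gcd (Npaper_ne_zero hj0) (Npaper_ne_zero hk0)]
  intro p
  by_cases hp : p.Prime
  swap
  · simp [Nat.factorization_eq_zero_of_not_prime _ hp]
  rw [Finsupp.inf_apply, factorization_Npaper_of_even hj0 hj hp,
    factorization_Npaper_of_even hk0 hk hp, factorization_Npaper_of_even hjk0 (by omega) hp]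
  have hmin := Nat.min_factorization_le_factorization_add j k p
  have hdvd : (p - 1) ∣ j → (p - 1) ∣ k → (p - 1) ∣ j + k := dvd_add
  split_ifs <;> grind

/-- `gcd (N j) (N k) ∣ N (j + k)`. -/
theorem stmt_4 (j k : ℕ) : Nat.gcd (Npaper j) (Npaper k) ∣ Npaper (j + k) := by
  rcases eq_or_ne j 0 with rfl | hj0
  · simp [Npaper]
  rcases eq_or_ne k 0 with rfl | hk0
  · simp [Npaper]
  rcases Nat.mod_two_eq_zero_or_one j with hj | hj <;>
    rcases Nat.mod_two_eq_zero_or_one k with hk | hk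
  · exact gcd_Npaper_dvd_of_even hj0 hj hk0 hk
  · rw [Npaper_of_odd (by omega : (j + k) % 2 = 1), ← Npaper_of_odd hk]
    exact Nat.gcd_dvd_right _ _
  · rw [Npaper_of_odd (by omega : (j + k) % 2 = 1), ← Npaper_of_odd hj]
    exact Nat.gcd_dvd_left _ _
  · rw [Npaper_of_odd hj]
    exact (Nat.gcd_dvd_left _ _).trans (two_dvd_Npaper_of_even (by omega) (by omega))
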